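/- arXiv:2409.12079 — 3 statements merged into one kernel-verified Lean document; each statement's English description precedes it below -/
import Mathlib

section
/- The grade M of the Liouvillian Krylov space, i.e. the dimension of Span{Lᵏ(O) : k ∈ ℕ} with L(O) = [H,O], equals N_ω - N₁, where N_ω is the number of pairwise distinct transition frequencies ε_m - ε_n of the Hermitian matrix H and N₁ is the number of frequencies whose aggregated matrix component σ_P of O vanishes. -/
/-!
In the eigenbasis of `H` the Liouvillian `L = [H, ·]` is diagonal: `L |φ_m⟩⟨φ_n| =
(ε_m - ε_n) |φ_m⟩⟨φ_n|`. Hence `O = ∑_P σ_P` splits `O` into eigenvectors of `L` with pairwise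
distinct eigenvalues `ω_P`, and `Lᵏ O = ∑_P ω_Pᵏ σ_P`. So the Krylov space lies in the span of the
`σ_P`; conversely, applying to `O` the Lagrange polynomial of the node `ω_P` gives back `σ_P`.
Nonzero eigenvectors for distinct eigenvalues are linearly independent, so the dimension is the
number of nonzero `σ_P`.
-/

open Matrix Polynomial

namespace Module.End

section CommSemiring

variable {R M : Type*} [CommSemiring R] [AddCommMonoid M] [Module R M]

def krylov (f : End R M) (v : M) : Submodule R M :=
  Submodule.span R (Set.range fun k : ℕ => (f ^ k) v)

theorem aeval_apply_mem_krylov (f : End R M) (p : R[X]) (v : M) :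
    aeval f p v ∈ f.krylov v := by
  rw [aeval_eq_sum_range, LinearMap.sum_apply]
  exact Submodule.sum_mem _ fun k _ => Submodule.smul_mem _ _ (Submodule.subset_span ⟨k, rfl⟩)

end CommSemiring

variable {K V : Type*} [Field K] [AddCommGroup V] [Module K V]
variable {ι : Type*} [Fintype ι] {f : End K V} {μ : ι → K} {x : ι → V}

theorem krylov_sum_eq_span_range (hx : ∀ i, f (x i) = μ i • x i) (hμ : Function.Injective μ) :
    f.krylov (∑ i, x i) = Submodule.span K (Set.range x) := by
  classical
  have aeval_sum (p : K[X]) : aeval f p (∑ i, x i) = ∑ i, p.eval (μ i) • x i := by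
    simp only [map_sum, aeval_apply_of_mem_apply_eq_smul (hx _)]
  apply le_antisymm
  · rw [krylov, Submodule.span_le]
    rintro _ ⟨k, rfl⟩
    have hpow := aeval_sum (X ^ k)
    simp only [map_pow, aeval_X, eval_pow, eval_X] at hpow
    simp only [hpow]
    exact Submodule.sum_mem _ fun i _ => Submodule.smul_mem _ _ (Submodule.subset_span ⟨i, rfl⟩)
  · rw [Submodule.span_le]
    rintro _ ⟨j, rfl⟩
    have hj : aeval f (Lagrange.basis Finset.univ μ j) (∑ i, x i) = x j := by
      rw [aeval_sum, Finset.sum_eq_single j (fun i _ hij => by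
        rw [Lagrange.eval_basis_of_ne hij.symm (Finset.mem_univ i), zero_smul]) (by simp),
        Lagrange.eval_basis_self hμ.injOn (Finset.mem_univ j), one_smul]
    exact hj ▸ aeval_apply_mem_krylov f _ _

theorem finrank_span_range_of_apply_eq_smul (hx : ∀ i, f (x i) = μ i • x i)
    (hμ : Function.Injective μ) :
    Module.finrank K (Submodule.span K (Set.range x)) = Nat.card {i // x i ≠ 0} := by
  classical
  have hli : LinearIndependent K fun i : {i // x i ≠ 0} => x i :=
    f.eigenvectors_linearIndependent' (μ ∘ Subtype.val) (hμ.comp Subtype.val_injective) _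
      fun i => ⟨mem_eigenspace_iff.mpr (hx i), i.2⟩
  have hspan : Submodule.span K (Set.range x) =
      Submodule.span K (Set.range fun i : {i // x i ≠ 0} => x i) := by
    rw [← Submodule.span_sdiff_singleton_zero (s := Set.range x)]
    congr 1
    ext v
    simp only [Set.mem_sdiff, Set.mem_range, Set.mem_singleton_iff]
    constructor
    · rintro ⟨⟨i, rfl⟩, hi⟩
      exact ⟨⟨i, hi⟩, rfl⟩
    · rintro ⟨i, rfl⟩
      exact ⟨⟨i, rfl⟩, i.2⟩
  rw [hspan, finrank_span_eq_card hli, Nat.card_eq_fintype_card]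

theorem finrank_krylov_sum_of_apply_eq_smul (hx : ∀ i, f (x i) = μ i • x i)
    (hμ : Function.Injective μ) :
    Module.finrank K (f.krylov (∑ i, x i)) = Nat.card {i // x i ≠ 0} := by
  rw [krylov_sum_eq_span_range hx hμ, finrank_span_range_of_apply_eq_smul hx hμ]

end Module.End

namespace Matrix

variable {n R : Type*} [Fintype n]

section CommRing

variable [CommRing R]

def liouvillian (H : Matrix n n R) : Module.End R (Matrix n n R) :=
  LinearMap.mulLeft R H - LinearMap.mulRight R H

theorem liouvillian_apply (H A : Matrix n n R) : liouvillian H A = H * A - A * H := rfl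

theorem liouvillian_vecMulVec {H : Matrix n n R} {u w : n → R} {a b : R}
    (hu : H *ᵥ u = a • u) (hw : w ᵥ* H = b • w) :
    liouvillian H (vecMulVec u w) = (a - b) • vecMulVec u w := by
  rw [liouvillian_apply, mul_vecMulVec, vecMulVec_mul, hu, hw, smul_vecMulVec, vecMulVec_smul,
    sub_smul]

variable [StarRing R] [DecidableEq n]

theorem sum_vecMulVec_star_eq_one {φ : n → n → R}
    (horth : ∀ i j, star (φ i) ⬝ᵥ φ j = if i = j then 1 else 0) :
    ∑ m, vecMulVec (φ m) (star (φ m)) = 1 := by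
  -- `U` has the `φ m` as columns, so `horth` says `Uᴴ U = 1`; the claim is `U Uᴴ = 1`.
  let U : Matrix n n R := of fun i m => φ m i
  have hU : Uᴴ * U = 1 := by
    ext i j
    simpa [U, mul_apply, one_apply, dotProduct] using horth i j
  have hU' : U * Uᴴ = 1 := mul_eq_one_comm.mp hU
  ext i j
  simpa [U, mul_apply, vecMulVec_apply, Matrix.sum_apply] using congrFun (congrFun hU' i) j

theorem eq_sum_vecMulVec_of_sum_eq_one {φ : n → n → R}
    (hφ : ∑ m, vecMulVec (φ m) (star (φ m)) = 1) (M : Matrix n n R) :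
    M = ∑ m, ∑ k, (star (φ m) ⬝ᵥ M *ᵥ φ k) • vecMulVec (φ m) (star (φ k)) := by
  calc M = (∑ m, vecMulVec (φ m) (star (φ m))) * M * ∑ k, vecMulVec (φ k) (star (φ k)) := by
        rw [hφ, Matrix.one_mul, Matrix.mul_one]
    _ = ∑ m, ∑ k, vecMulVec (φ m) (star (φ m)) * M * vecMulVec (φ k) (star (φ k)) := by
        simp only [Finset.sum_mul, Finset.mul_sum]
        exact Finset.sum_comm
    _ = _ := by
        simp only [vecMulVec_mul, vecMul_vecMulVec, vecMulVec_smul, dotProduct_mulVec]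

end CommRing

theorem IsHermitian.star_vecMul_of_mulVec_eq_smul [CommRing R] [StarRing R] {H : Matrix n n R}
    (hH : H.IsHermitian) {v : n → R} {c : R} (hv : H *ᵥ v = c • v) :
    star v ᵥ* H = star c • star v := by
  rw [← hH.eq, ← star_mulVec, hv, star_smul]

section Frequency

variable {ι : Type*}

noncomputable def frequencyComponent (φ : n → n → ℂ) (ε : n → ℝ) (O : Matrix n n ℂ) (w : ℝ) :
    Matrix n n ℂ :=
  ∑ m, ∑ k, if ε m - ε k = w then (star (φ m) ⬝ᵥ O *ᵥ φ k) • vecMulVec (φ m) (star (φ k)) else 0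

theorem liouvillian_frequencyComponent {H : Matrix n n ℂ} (hH : H.IsHermitian) {φ : n → n → ℂ}
    {ε : n → ℝ} (heig : ∀ j, H *ᵥ φ j = (ε j : ℂ) • φ j) (O : Matrix n n ℂ) (w : ℝ) :
    liouvillian H (frequencyComponent φ ε O w) = (w : ℂ) • frequencyComponent φ ε O w := by
  have hleft (j : n) : star (φ j) ᵥ* H = (ε j : ℂ) • star (φ j) := by
    rw [hH.star_vecMul_of_mulVec_eq_smul (heig j), Complex.star_def, Complex.conj_ofReal]
  simp only [frequencyComponent, map_sum, Finset.smul_sum]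
  refine Finset.sum_congr rfl fun m _ => Finset.sum_congr rfl fun k _ => ?_
  split_ifs with h
  · rw [map_smul, liouvillian_vecMulVec (heig m) (hleft k), smul_comm, ← h, Complex.ofReal_sub]
  · simp

theorem sum_frequencyComponent [DecidableEq n] {φ : n → n → ℂ}
    (hφ : ∑ m, vecMulVec (φ m) (star (φ m)) = 1) {ε : n → ℝ} [Fintype ι] {ω : ι → ℝ}
    (hω : Function.Injective ω) (hrange : ∀ m k, ∃ P, ω P = ε m - ε k) (O : Matrix n n ℂ) :
    ∑ P, frequencyComponent φ ε O (ω P) = O := by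
  classical
  conv_rhs => rw [eq_sum_vecMulVec_of_sum_eq_one hφ O]
  simp only [frequencyComponent]
  rw [Finset.sum_comm]
  refine Finset.sum_congr rfl fun m _ => ?_
  rw [Finset.sum_comm]
  refine Finset.sum_congr rfl fun k _ => ?_
  obtain ⟨P₀, hP₀⟩ := hrange m k
  rw [← hP₀]
  simp only [hω.eq_iff, Finset.sum_ite_eq, Finset.mem_univ, if_true]

end Frequency

end Matrix

/-- The grade `M` of the Liouvillian Krylov space, i.e. the dimension of
`Span{Lᵏ(O) : k ∈ ℕ}` with `L(A) = [H,A]`, equals `N_ω - N₁`, the number of pairwise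
distinct transition frequencies minus the number of vanishing components `σ_P`. -/
theorem liouvillian_krylov_grade {N Nω : ℕ}
    (H O : Matrix (Fin N) (Fin N) ℂ) (hH : H.IsHermitian)
    (φ : Fin N → (Fin N → ℂ)) (ε : Fin N → ℝ)
    (heig : ∀ j, H.mulVec (φ j) = (ε j : ℂ) • φ j)
    (horth : ∀ i j, star (φ i) ⬝ᵥ φ j = if i = j then 1 else 0)
    (ω : Fin Nω → ℝ) (hωinj : Function.Injective ω)
    (hωrange : Set.range ω = {x : ℝ | ∃ m n, x = ε m - ε n})
    (σ : Fin Nω → Matrix (Fin N) (Fin N) ℂ)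
    (hσ : ∀ P, σ P = ∑ m : Fin N, ∑ n : Fin N,
      if ε m - ε n = ω P then
        (star (φ m) ⬝ᵥ O.mulVec (φ n)) • vecMulVec (φ m) (star (φ n))
      else 0) :
    Module.finrank ℂ
        (Submodule.span ℂ (Set.range fun k : ℕ =>
          (fun A : Matrix (Fin N) (Fin N) ℂ => H * A - A * H)^[k] O)) =
      Nω - Fintype.card {P : Fin Nω // σ P = 0} := by
  have hσ' : σ = fun P => frequencyComponent φ ε O (ω P) := funext hσ
  have hrange (m n : Fin N) : ∃ P, ω P = ε m - ε n :=
    (Set.ext_iff.mp hωrange (ε m - ε n)).mpr ⟨m, n, rfl⟩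
  have hO : ∑ P, σ P = O := by
    rw [hσ', sum_frequencyComponent (sum_vecMulVec_star_eq_one horth) hωinj hrange]
  have hσ_eig (P : Fin Nω) : liouvillian H (σ P) = (ω P : ℂ) • σ P := by
    rw [hσ']
    exact liouvillian_frequencyComponent hH heig O (ω P)
  have hkrylov : Submodule.span ℂ (Set.range fun k : ℕ =>
      (fun A : Matrix (Fin N) (Fin N) ℂ => H * A - A * H)^[k] O) =
      (liouvillian H).krylov (∑ P, σ P) := by
    rw [hO, Module.End.krylov]
    simp only [Module.End.coe_pow]
    rfl
  rw [hkrylov, Module.End.finrank_krylov_sum_of_apply_eq_smul hσ_eig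
    (Complex.ofReal_injective.comp hωinj), Nat.card_eq_fintype_card, Fintype.card_subtype_compl,
    Fintype.card_fin]
end

section
/- There is no subspace W of ℂᴺ with dim(W) < m such that exp(-iHt)|ψ₀⟩ ∈ W for all t ∈ ℝ, where m = dim(Span{Hᵏ|ψ₀⟩ : k ∈ ℕ}); i.e., the Krylov state space is minimal among subspaces containing the entire time-evolution orbit. -/
/-!
A curve lying in a closed subspace has all its derivatives in that subspace. The `k`-th
derivative at `0` of `t ↦ exp(t • (-iH)) ψ₀` is `(-iH)ᵏ ψ₀`, so every Krylov vector `Hᵏ ψ₀`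
lies in `W`, hence so does their span.
-/

open Matrix

section

variable {𝕜 F : Type*} [NontriviallyNormedField 𝕜] [NormedAddCommGroup F] [NormedSpace 𝕜 F]

theorem Submodule.deriv_mem_of_forall_mem {W : Submodule 𝕜 F} (hW : IsClosed (W : Set F))
    {f : 𝕜 → F} (hf : ∀ t, f t ∈ W) (t : 𝕜) : deriv f t ∈ W := by
  have hspan : closure (Submodule.span 𝕜 (f '' Set.univ) : Set F) ⊆ W :=
    hW.closure_subset_iff.mpr <| Submodule.span_le.mpr <| by
      rintro _ ⟨s, -, rfl⟩
      exact hf s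
  apply hspan
  rw [← derivWithin_univ]
  exact range_derivWithin_subset_closure_span_image f (by simp) ⟨t, rfl⟩

theorem Submodule.iteratedDeriv_mem_of_forall_mem {W : Submodule 𝕜 F}
    (hW : IsClosed (W : Set F)) {f : 𝕜 → F} (hf : ∀ t, f t ∈ W) (k : ℕ) (t : 𝕜) :
    iteratedDeriv k f t ∈ W := by
  induction k generalizing t with
  | zero => simpa using hf t
  | succ k ih =>
    rw [iteratedDeriv_succ]
    exact Submodule.deriv_mem_of_forall_mem hW ih t

end

section

open NormedSpace

variable {𝕂 𝔸 : Type*} [RCLike 𝕂] [NormedRing 𝔸] [NormedAlgebra 𝕂 𝔸] [CompleteSpace 𝔸]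

theorem iteratedDeriv_exp_smul_const (x : 𝔸) (k : ℕ) :
    iteratedDeriv k (fun t : 𝕂 => exp (t • x)) = fun t => x ^ k * exp (t • x) := by
  induction k with
  | zero => simp
  | succ k ih =>
    ext t
    rw [iteratedDeriv_succ, ih, pow_succ, mul_assoc]
    exact ((hasDerivAt_exp_smul_const' x t).const_mul (x ^ k)).deriv

theorem Submodule.pow_mem_of_forall_exp_smul_mem {S : Submodule 𝕂 𝔸}
    (hS : IsClosed (S : Set 𝔸)) {x : 𝔸} (hx : ∀ t : 𝕂, exp (t • x) ∈ S) (k : ℕ) :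
    x ^ k ∈ S := by
  simpa [iteratedDeriv_exp_smul_const] using S.iteratedDeriv_mem_of_forall_mem hS hx k 0

end

theorem krylov_state_space_minimal_general {N : ℕ} (H : Matrix (Fin N) (Fin N) ℂ)
    (ψ₀ : Fin N → ℂ) (W : Submodule ℂ (Fin N → ℂ))
    (hW : ∀ t : ℝ, (NormedSpace.exp ((-(Complex.I * (t : ℂ))) • H)).mulVec ψ₀ ∈ W) :
    Module.finrank ℂ
        (Submodule.span ℂ (Set.range fun k : ℕ => (H ^ k).mulVec ψ₀)) ≤
      Module.finrank ℂ W := by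
  -- `exp` depends only on the topology, which every matrix norm induces; we pick one.
  let _ : NormedRing (Matrix (Fin N) (Fin N) ℂ) := Matrix.linftyOpNormedRing
  let _ : NormedAlgebra ℝ (Matrix (Fin N) (Fin N) ℂ) := Matrix.linftyOpNormedAlgebra
  let S := (W.restrictScalars ℝ).comap ((mulVecBilin ℝ ℝ).flip ψ₀)
  have hS : IsClosed (S : Set (Matrix (Fin N) (Fin N) ℂ)) :=
    W.closed_of_finiteDimensional.preimage (continuous_id.matrix_mulVec continuous_const)
  have hexp : ∀ t : ℝ, NormedSpace.exp (t • (-Complex.I) • H) ∈ S := by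
    intro t
    rw [← smul_assoc, Complex.real_smul, mul_neg, mul_comm]
    exact hW t
  refine Submodule.finrank_mono (Submodule.span_le.mpr ?_)
  rintro _ ⟨k, rfl⟩
  have hpow := S.pow_mem_of_forall_exp_smul_mem hS hexp k
  rw [Submodule.mem_comap, smul_pow, LinearMap.flip_apply, mulVecBilin_apply,
    smul_mulVec] at hpow
  exact (W.smul_mem_iff (pow_ne_zero k (neg_ne_zero.mpr Complex.I_ne_zero))).mp hpow

/-- Minimality of the Krylov state space: any subspace `W` of `ℂᴺ` containing the entire
time-evolution orbit `exp(-iHt)|ψ₀⟩` for all `t ∈ ℝ` has dimension at least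
`m = dim Span{Hᵏ|ψ₀⟩ : k ∈ ℕ}`. -/
theorem krylov_state_space_minimal {N : ℕ} (H : Matrix (Fin N) (Fin N) ℂ)
    (hH : H.IsHermitian) (ψ₀ : Fin N → ℂ) (W : Submodule ℂ (Fin N → ℂ))
    (hW : ∀ t : ℝ, (NormedSpace.exp ((-(Complex.I * (t : ℂ))) • H)).mulVec ψ₀ ∈ W) :
    Module.finrank ℂ
        (Submodule.span ℂ (Set.range fun k : ℕ => (H ^ k).mulVec ψ₀)) ≤
      Module.finrank ℂ W :=
  krylov_state_space_minimal_general H ψ₀ W hW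
end

section
/- If H is Hermitian with d pairwise distinct eigenvalues, then the number N_ω of pairwise distinct transition frequencies ε_m - ε_n satisfies d ≤ N_ω ≤ d² - d + 1, and the minimal polynomial degree of the Liouvillian superoperator L(·) = [H, ·] on the full matrix space equals N_ω. -/
/-!
The outer products `φ j ⬝ φ kᴴ` of an orthonormal eigenbasis of `H` are eigenvectors of the
Liouvillian with eigenvalues `ε j - ε k`, and they span the matrix space. An endomorphism with a
spanning family of eigenvectors is annihilated by `∏ (X - λ)` over its distinct eigenvalues, each
of which is a root of its minimal polynomial; so the degree of the minimal polynomial is the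
number of distinct transition frequencies. The bounds on that number are counting: the
differences `εd m - εd n` for a fixed `n` are already `d` distinct ones, and apart from `0` only
the `d² - d` ordered pairs `m ≠ n` contribute.
-/

open Finset Matrix Polynomial
open scoped Pointwise

namespace Finset

variable {α : Type*} [AddGroup α] [DecidableEq α]

theorem card_sub_self_le (s : Finset α) : #(s - s) ≤ #s ^ 2 - #s + 1 := by
  have hsub : s - s ⊆ insert 0 (s.offDiag.image fun p => p.1 - p.2) := by
    intro x hx
    obtain ⟨a, ha, b, hb, rfl⟩ := mem_sub.mp hx
    rcases eq_or_ne a b with rfl | hab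
    · simp
    · exact mem_insert_of_mem (mem_image.mpr ⟨(a, b), mem_offDiag.mpr ⟨ha, hb, hab⟩, rfl⟩)
  calc #(s - s) ≤ #(s.offDiag.image fun p => p.1 - p.2) + 1 :=
        (card_le_card hsub).trans (card_insert_le _ _)
    _ ≤ #s.offDiag + 1 := by gcongr; exact card_image_le
    _ = #s ^ 2 - #s + 1 := by rw [offDiag_card, sq]

end Finset

namespace Module.End

variable {K V ι : Type*} [Field K] [AddCommGroup V] [Module K V]
  {f : Module.End K V} {v : ι → V} {μ : ι → K}

theorem aeval_eq_zero_of_span_eigenvectors (hf : ∀ i, f (v i) = μ i • v i)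
    (hspan : Submodule.span K (Set.range v) = ⊤) {p : K[X]} (hp : ∀ i, p.IsRoot (μ i)) :
    aeval f p = 0 :=
  LinearMap.ext_on_range hspan fun i => by
    rw [aeval_apply_of_mem_apply_eq_smul (hf i), (hp i).eq_zero, zero_smul, LinearMap.zero_apply]

theorem natDegree_minpoly_eq_ncard_range [FiniteDimensional K V] [Fintype ι]
    (hv : ∀ i, v i ≠ 0) (hf : ∀ i, f (v i) = μ i • v i)
    (hspan : Submodule.span K (Set.range v) = ⊤) :
    (minpoly K f).natDegree = (Set.range μ).ncard := by
  classical
  set s := univ.image μ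
  have hs : (Set.range μ).ncard = #s := by
    rw [← Set.ncard_coe_finset, coe_image, coe_univ, Set.image_univ]
  rw [hs]
  apply le_antisymm
  · have hdvd : minpoly K f ∣ ∏ a ∈ s, (X - C a) :=
      minpoly.dvd K f <| aeval_eq_zero_of_span_eigenvectors hf hspan fun i =>
        (eval_prod ..).trans (prod_eq_zero (mem_image_of_mem μ (mem_univ i)) (by simp))
    calc (minpoly K f).natDegree ≤ (∏ a ∈ s, (X - C a)).natDegree :=
          natDegree_le_of_dvd hdvd (monic_prod_of_monic _ _ fun a _ => monic_X_sub_C a).ne_zero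
      _ = #s := natDegree_finsetProd_X_sub_C_eq_card s id
  · have hne : minpoly K f ≠ 0 := minpoly.ne_zero (Algebra.IsIntegral.isIntegral f)
    have hroots : s ⊆ (minpoly K f).roots.toFinset := by
      intro a ha
      obtain ⟨i, -, rfl⟩ := mem_image.mp ha
      rw [Multiset.mem_toFinset, mem_roots hne]
      exact isRoot_of_hasEigenvalue <| hasEigenvalue_of_hasEigenvector
        ⟨mem_eigenspace_iff.mpr (hf i), hv i⟩
    calc #s ≤ #(minpoly K f).roots.toFinset := card_le_card hroots
      _ ≤ Multiset.card (minpoly K f).roots := Multiset.toFinset_card_le _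
      _ ≤ (minpoly K f).natDegree := card_roots' _

end Module.End

namespace Matrix

theorem vecMulVec_mul_mul_vecMulVec {R n : Type*} [CommSemiring R] [Fintype n]
    (u v w x : n → R) (A : Matrix n n R) :
    vecMulVec u v * A * vecMulVec w x = (v ᵥ* A ⬝ᵥ w) • vecMulVec u x := by
  rw [vecMulVec_mul, vecMulVec_mul_vecMulVec, vecMulVec_smul]

variable {𝕜 n : Type*} [RCLike 𝕜] [Fintype n]

theorem commutator_vecMulVec_star_of_mulVec_eq {H : Matrix n n 𝕜} (hH : H.IsHermitian)
    {u w : n → 𝕜} {a b : ℝ} (hu : H *ᵥ u = (a : 𝕜) • u) (hw : H *ᵥ w = (b : 𝕜) • w) :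
    H * vecMulVec u (star w) - vecMulVec u (star w) * H =
      ((a - b : ℝ) : 𝕜) • vecMulVec u (star w) := by
  have hw' : star w ᵥ* H = (b : 𝕜) • star w := by
    rw [← hH.eq, ← star_mulVec, hw, star_smul, RCLike.star_def, RCLike.conj_ofReal]
  rw [mul_vecMulVec, vecMulVec_mul, hu, hw', smul_vecMulVec, vecMulVec_smul, RCLike.ofReal_sub,
    sub_smul]

variable [DecidableEq n] {φ : n → n → 𝕜}

theorem sum_vecMulVec_star_self_eq_one
    (hφ : ∀ i j, star (φ i) ⬝ᵥ φ j = if i = j then 1 else 0) :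
    ∑ k, vecMulVec (φ k) (star (φ k)) = 1 := by
  set U : Matrix n n 𝕜 := (of φ)ᵀ
  have hU : Uᴴ * U = 1 := by
    ext i j
    simpa [U, mul_apply, dotProduct, one_apply] using hφ i j
  rw [← mul_eq_one_comm.mp hU]
  ext a b
  simp [U, mul_apply, vecMulVec_apply, Matrix.sum_apply]

theorem span_vecMulVec_star_eq_top
    (hφ : ∀ i j, star (φ i) ⬝ᵥ φ j = if i = j then 1 else 0) :
    Submodule.span 𝕜 (Set.range fun p : n × n => vecMulVec (φ p.1) (star (φ p.2))) = ⊤ := by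
  refine Submodule.eq_top_iff'.mpr fun A => ?_
  have hA : A = ∑ j, ∑ k, (star (φ j) ᵥ* A ⬝ᵥ φ k) • vecMulVec (φ j) (star (φ k)) := by
    conv_lhs => rw [← A.one_mul, ← A.mul_one, ← sum_vecMulVec_star_self_eq_one hφ]
    simp only [Finset.sum_mul, Finset.mul_sum, ← Matrix.mul_assoc, vecMulVec_mul_mul_vecMulVec]
    exact Finset.sum_comm
  rw [hA]
  exact Submodule.sum_mem _ fun j _ => Submodule.sum_mem _ fun k _ =>
    Submodule.smul_mem _ _ (Submodule.subset_span ⟨(j, k), rfl⟩)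

end Matrix

theorem transition_frequencies_and_minpoly_degree_general {N d Nω : ℕ}
    (H : Matrix (Fin N) (Fin N) ℂ) (hH : H.IsHermitian)
    (φ : Fin N → (Fin N → ℂ)) (ε : Fin N → ℝ)
    (heig : ∀ j, H.mulVec (φ j) = (ε j : ℂ) • φ j)
    (horth : ∀ i j, star (φ i) ⬝ᵥ φ j = if i = j then 1 else 0)
    (εd : Fin d → ℝ) (hdinj : Function.Injective εd)
    (hdrange : Set.range εd = Set.range ε)
    (ω : Fin Nω → ℝ) (hωinj : Function.Injective ω)
    (hωrange : Set.range ω = {x : ℝ | ∃ m n, x = εd m - εd n}) :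
    d ≤ Nω ∧ Nω ≤ d ^ 2 - d + 1 ∧
      (minpoly ℂ
          (LinearMap.mulLeft ℂ H - LinearMap.mulRight ℂ H :
            Module.End ℂ (Matrix (Fin N) (Fin N) ℂ))).natDegree = Nω := by
  classical
  have hω : Set.range ω = Set.range εd - Set.range εd := by
    rw [hωrange, ← Set.image2_sub, Set.image2_range]
    ext x
    simp [eq_comm]
  set S := univ.image εd
  have hd : #S = d := by rw [card_image_of_injective _ hdinj, card_univ, Fintype.card_fin]
  have hNω : #(S - S) = Nω := by
    rw [← Set.ncard_coe_finset, Finset.coe_sub, coe_image, coe_univ, Set.image_univ, ← hω,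
      Set.ncard_range_of_injective hωinj, Nat.card_fin]
  refine ⟨hd ▸ hNω ▸ card_le_card_sub_self, hd ▸ hNω ▸ S.card_sub_self_le, ?_⟩
  have hφ : ∀ j, φ j ≠ 0 := fun j h => by simpa [h] using horth j j
  rw [Module.End.natDegree_minpoly_eq_ncard_range
    (v := fun p : Fin N × Fin N => vecMulVec (φ p.1) (star (φ p.2)))
    (μ := fun p => ((ε p.1 - ε p.2 : ℝ) : ℂ))
    (fun p => vecMulVec_ne_zero (hφ p.1) (star_ne_zero.mpr (hφ p.2)))
    (fun p => commutator_vecMulVec_star_of_mulVec_eq hH (heig p.1) (heig p.2))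
    (span_vecMulVec_star_eq_top horth)]
  have hμ : (Set.range fun p : Fin N × Fin N => ((ε p.1 - ε p.2 : ℝ) : ℂ)) =
      Complex.ofReal '' Set.range ω := by
    rw [hω, hdrange, ← Set.image2_sub, Set.image2_range, ← Set.range_comp]
    rfl
  rw [hμ, Set.ncard_image_of_injective _ Complex.ofReal_injective,
    Set.ncard_range_of_injective hωinj, Nat.card_fin]

/-- For a Hermitian `H` with exactly `d` pairwise distinct eigenvalues, the number `N_ω`
of pairwise distinct transition frequencies `ε_m - ε_n` satisfies `d ≤ N_ω ≤ d² - d + 1`,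
and the degree of the minimal polynomial of the Liouvillian `L(A) = HA - AH` on the full
matrix space equals `N_ω`. -/
theorem transition_frequencies_and_minpoly_degree {N d Nω : ℕ} (hN : 0 < N)
    (H : Matrix (Fin N) (Fin N) ℂ) (hH : H.IsHermitian)
    (φ : Fin N → (Fin N → ℂ)) (ε : Fin N → ℝ)
    (heig : ∀ j, H.mulVec (φ j) = (ε j : ℂ) • φ j)
    (horth : ∀ i j, star (φ i) ⬝ᵥ φ j = if i = j then 1 else 0)
    (εd : Fin d → ℝ) (hdinj : Function.Injective εd)
    (hdrange : Set.range εd = Set.range ε)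
    (ω : Fin Nω → ℝ) (hωinj : Function.Injective ω)
    (hωrange : Set.range ω = {x : ℝ | ∃ m n, x = εd m - εd n}) :
    d ≤ Nω ∧ Nω ≤ d ^ 2 - d + 1 ∧
      (minpoly ℂ
          (LinearMap.mulLeft ℂ H - LinearMap.mulRight ℂ H :
            Module.End ℂ (Matrix (Fin N) (Fin N) ℂ))).natDegree = Nω :=
  transition_frequencies_and_minpoly_degree_general H hH φ ε heig horth εd hdinj hdrange ω hωinj
    hωrange
end
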